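/- arXiv:1807.08051 — 4 statements merged into one kernel-verified Lean document; each statement's English description precedes it below -/
import Mathlib

section
/- Jacobi's triple product identity: ∏_{n≥1} (1 - z q^(n-1))(1 - z^(-1) q^n)(1 - q^n) = ∑_{n∈ℤ} (-1)^n z^n q^(n(n-1)/2). -/
/-!
Gauss's `q`-binomial theorem `∏_{j<n} (1 + x q^j) = ∑_k q^(k choose 2) [n, k]_q x^k`, taken at
`n = 2m` and `x = -z q^(-m)`, gives the finite identity
`∏_{j<m} (1 - z q^j)(1 - z⁻¹ q^(j+1)) = ∑_{|t| ≤ m} (-1)^t z^t q^(t(t-1)/2) [2m, m+t]_q`.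
As `m → ∞`, `[2m, m+t]_q = (q;q)_{2m} / ((q;q)_{m+t} (q;q)_{m-t})` tends to `1 / (q;q)_∞`.
Since the Gaussian binomials have nonnegative coefficients,
`|[n, k]_q| ≤ [n, k]_{|q|} ≤ 1 / (|q|;|q|)_∞`, so Tannery's theorem lets the limit pass through the sum over `t`.
The case `q = 0` (where `q^(-m)` makes no sense) is checked directly: both sides are `1 - z`.
-/

open Finset Filter Topology

section Algebra

variable {R K : Type*}

def qBinom [Semiring R] (q : R) : ℕ → ℕ → R
  | _, 0 => 1
  | 0, _ + 1 => 0
  | n + 1, k + 1 => q ^ (k + 1) * qBinom q n (k + 1) + qBinom q n k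

/-- `(q; q)_n` -/
def qPochhammer [CommRing R] (q : R) (n : ℕ) : R := ∏ j ∈ range n, (1 - q ^ (j + 1))

def jacobiTerm [DivisionRing K] (q z : K) (t : ℤ) : K :=
  (-1) ^ t * z ^ t * q ^ ((t * (t - 1)) / 2).toNat

section Semiring

variable [Semiring R] (q : R)

@[simp] lemma qBinom_zero_right (n : ℕ) : qBinom q n 0 = 1 := by cases n <;> rfl

lemma qBinom_succ_succ (n k : ℕ) :
    qBinom q (n + 1) (k + 1) = q ^ (k + 1) * qBinom q n (k + 1) + qBinom q n k := rfl

lemma qBinom_eq_zero_of_lt : ∀ {n k : ℕ}, n < k → qBinom q n k = 0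
  | 0, _ + 1, _ => rfl
  | n + 1, k + 1, h => by
    rw [qBinom_succ_succ, qBinom_eq_zero_of_lt (by omega), qBinom_eq_zero_of_lt (by omega),
      mul_zero, add_zero]

@[simp] lemma qBinom_self : ∀ n : ℕ, qBinom q n n = 1
  | 0 => rfl
  | n + 1 => by
    rw [qBinom_succ_succ, qBinom_eq_zero_of_lt q n.lt_succ_self, qBinom_self n, mul_zero, zero_add]

end Semiring

theorem prod_one_add_mul_pow_eq_sum_qBinom [CommSemiring R] (q : R) (n : ℕ) (x : R) :
    ∏ j ∈ range n, (1 + x * q ^ j) =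
      ∑ k ∈ range (n + 1), q ^ k.choose 2 * qBinom q n k * x ^ k := by
  induction n generalizing x with
  | zero => simp
  | succ n ih =>
    set f : ℕ → R := fun k => q ^ k.choose 2 * qBinom q n k * (x * q) ^ k
    have hsplit (k : ℕ) : q ^ (k + 1).choose 2 * qBinom q (n + 1) (k + 1) * x ^ (k + 1) =
        f (k + 1) + x * f k := by
      simp only [f, qBinom_succ_succ, Nat.choose_succ_succ', Nat.choose_one_right]
      ring
    have hlast : f (n + 1) = 0 := by simp [f, qBinom_eq_zero_of_lt q n.lt_succ_self]
    calc ∏ j ∈ range (n + 1), (1 + x * q ^ j)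
        = (1 + x) * ∏ j ∈ range n, (1 + x * q * q ^ j) := by
          rw [prod_range_succ', mul_comm]
          simp [pow_succ', mul_assoc]
      _ = (∑ k ∈ range (n + 1), f (k + 1) + f 0) + x * ∑ k ∈ range (n + 1), f k := by
          rw [ih, ← sum_range_succ' f, sum_range_succ f (n + 1), hlast]
          ring
      _ = ∑ k ∈ range (n + 2), q ^ k.choose 2 * qBinom q (n + 1) k * x ^ k := by
          rw [sum_range_succ' _ (n + 1), sum_congr rfl fun k _ => hsplit k, sum_add_distrib,
            mul_sum]
          simp only [f, Nat.choose_zero_succ, pow_zero, qBinom_zero_right, mul_one]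
          ring

lemma qPochhammer_succ [CommRing R] (q : R) (n : ℕ) :
    qPochhammer q (n + 1) = qPochhammer q n * (1 - q ^ (n + 1)) :=
  prod_range_succ _ _

theorem qBinom_mul_qPochhammer [CommRing R] (q : R) (a b : ℕ) :
    qBinom q (a + b) a * qPochhammer q a * qPochhammer q b = qPochhammer q (a + b) := by
  induction b generalizing a with
  | zero => simp [qPochhammer]
  | succ b ihb =>
    induction a with
    | zero => simp [qPochhammer]
    | succ a iha =>
      have h := ihb (a + 1)
      rw [show a + 1 + b = a + b + 1 by omega, qPochhammer_succ q a] at h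
      rw [show a + (b + 1) = a + b + 1 by omega, qPochhammer_succ q b] at iha
      rw [show a + 1 + (b + 1) = a + b + 1 + 1 by omega, qBinom_succ_succ,
        qPochhammer_succ q (a + b + 1), qPochhammer_succ q a, qPochhammer_succ q b]
      linear_combination q ^ (a + 1) * (1 - q ^ (b + 1)) * h + (1 - q ^ (a + 1)) * iha

lemma two_mul_mul_pred_div_two (t : ℤ) : 2 * (t * (t - 1) / 2) = t * (t - 1) :=
  Int.mul_ediv_cancel' (Int.even_mul_pred_self t).two_dvd

lemma mul_pred_div_two_nonneg (t : ℤ) : 0 ≤ t * (t - 1) / 2 := by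
  have : 0 ≤ t * (t - 1) := by rcases le_or_gt t 0 with h | h <;> nlinarith
  omega

lemma mul_pred_div_two_add_one (t : ℤ) : (t + 1) * (t + 1 - 1) / 2 = t * (t - 1) / 2 + t := by
  linarith [two_mul_mul_pred_div_two t, two_mul_mul_pred_div_two (t + 1)]

lemma mul_pred_div_two_sub_one (t : ℤ) :
    (t - 1) * (t - 1 - 1) / 2 = t * (t - 1) / 2 - t + 1 := by
  linarith [two_mul_mul_pred_div_two t, two_mul_mul_pred_div_two (t - 1)]

lemma natCast_choose_two (k : ℕ) : (k.choose 2 : ℤ) = k * (k - 1) / 2 := by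
  rw [Nat.choose_two_right, Int.natCast_div]
  cases k <;> simp

lemma natCast_choose_two_sub_mul (k m : ℕ) :
    (k.choose 2 : ℤ) - m * k = (k - m) * (k - m - 1) / 2 - ((m + 1).choose 2 : ℤ) := by
  rw [natCast_choose_two, natCast_choose_two]
  push_cast
  linarith [two_mul_mul_pred_div_two k, two_mul_mul_pred_div_two (k - m),
    two_mul_mul_pred_div_two (m + 1 : ℤ)]

lemma sum_range_add_one_eq_choose_two (m : ℕ) : ∑ j ∈ range m, (j + 1) = (m + 1).choose 2 := by
  rw [Nat.choose_two_right, ← Finset.sum_range_id, sum_range_succ']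
  simp

variable [Field K]

lemma jacobiTerm_eq_zpow (q z : K) (t : ℤ) :
    jacobiTerm q z t = (-z) ^ t * q ^ (t * (t - 1) / 2) := by
  rw [jacobiTerm, ← zpow_natCast, Int.toNat_of_nonneg (mul_pred_div_two_nonneg t),
    neg_eq_neg_one_mul z, mul_zpow]

lemma jacobiTerm_natCast_add_one (q z : K) (n : ℕ) :
    jacobiTerm q z (n + 1) = -z * q ^ n * jacobiTerm q z n := by
  have h : (((n : ℤ) + 1) * ((n : ℤ) + 1 - 1) / 2).toNat =
      ((n : ℤ) * ((n : ℤ) - 1) / 2).toNat + n := by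
    have := mul_pred_div_two_nonneg n
    rw [mul_pred_div_two_add_one]
    omega
  rw [jacobiTerm, jacobiTerm, h, show (n : ℤ) + 1 = ((n + 1 : ℕ) : ℤ) by push_cast; rfl]
  simp only [zpow_natCast, pow_succ, pow_add]
  ring

lemma jacobiTerm_neg_natCast_sub_one (q z : K) (n : ℕ) :
    jacobiTerm q z (-n - 1) = -z⁻¹ * q ^ (n + 1) * jacobiTerm q z (-n) := by
  have h : ((-(n : ℤ) - 1) * (-(n : ℤ) - 1 - 1) / 2).toNat =
      (-(n : ℤ) * (-(n : ℤ) - 1) / 2).toNat + (n + 1) := by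
    have := mul_pred_div_two_nonneg (-n)
    rw [mul_pred_div_two_sub_one]
    omega
  rw [jacobiTerm, jacobiTerm, h, show -(n : ℤ) - 1 = -((n + 1 : ℕ) : ℤ) by push_cast; ring]
  simp only [zpow_neg, zpow_natCast, pow_succ, pow_add, mul_inv]
  ring

variable {q z : K}

lemma pow_choose_two_mul_pow_eq_jacobiTerm_sub (hq : q ≠ 0) (hz : z ≠ 0) (k m : ℕ) :
    q ^ k.choose 2 * (-z * (q ^ m)⁻¹) ^ k =
      (-z) ^ m * (q ^ (m + 1).choose 2)⁻¹ * jacobiTerm q z (k - m) := by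
  have e : ((k : ℤ) - m) * (k - m - 1) / 2 =
      ((k.choose 2 + (m + 1).choose 2 : ℕ) : ℤ) - (m * k : ℕ) := by
    push_cast
    linarith [natCast_choose_two_sub_mul k m]
  have hz' : -z ≠ 0 := neg_ne_zero.2 hz
  rw [jacobiTerm_eq_zpow, e, zpow_sub₀ hq, zpow_sub₀ hz', zpow_natCast,
    zpow_natCast, zpow_natCast, zpow_natCast, pow_add, pow_mul, mul_pow, inv_pow]
  field_simp

lemma prod_range_two_mul_one_add_mul_pow (hq : q ≠ 0) (hz : z ≠ 0) (m : ℕ) :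
    ∏ j ∈ range (2 * m), (1 + -z * (q ^ m)⁻¹ * q ^ j) =
      (-z) ^ m * (q ^ (m + 1).choose 2)⁻¹ *
        ∏ j ∈ range m, ((1 - z * q ^ j) * (1 - z⁻¹ * q ^ (j + 1))) := by
  have hlow : ∀ j ∈ range m, 1 + -z * (q ^ m)⁻¹ * q ^ (m - 1 - j) =
      -z * (q ^ (j + 1))⁻¹ * (1 - z⁻¹ * q ^ (j + 1)) := by
    intro j hj
    rw [show q ^ m = q ^ (m - 1 - j) * q ^ (j + 1) by
      rw [← pow_add]; congr 1; have := mem_range.1 hj; omega]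
    field_simp
    ring
  have hhigh : ∀ j ∈ range m, 1 + -z * (q ^ m)⁻¹ * q ^ (m + j) = 1 - z * q ^ j := by
    intro j _
    rw [pow_add]
    field_simp
    ring
  rw [two_mul, prod_range_add, ← prod_range_reflect, prod_congr rfl hlow, prod_congr rfl hhigh,
    prod_mul_distrib, prod_mul_distrib, prod_mul_distrib, prod_const, card_range,
    prod_inv_distrib, prod_pow_eq_pow_sum, sum_range_add_one_eq_choose_two]
  ring

theorem prod_range_eq_sum_jacobiTerm_mul_qBinom (hq : q ≠ 0) (hz : z ≠ 0) (m : ℕ) :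
    ∏ j ∈ range m, ((1 - z * q ^ j) * (1 - z⁻¹ * q ^ (j + 1))) =
      ∑ t ∈ Icc (-(m : ℤ)) m, jacobiTerm q z t * qBinom q (2 * m) (m + t).toNat := by
  have hu : (-z) ^ m * (q ^ (m + 1).choose 2)⁻¹ ≠ 0 := by simp [hq, hz]
  apply mul_left_cancel₀ hu
  rw [← prod_range_two_mul_one_add_mul_pow hq hz, prod_one_add_mul_pow_eq_sum_qBinom, mul_sum,
    Int.Icc_eq_finset_map, sum_map, show ((m : ℤ) + 1 - -m).toNat = 2 * m + 1 by omega]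
  refine sum_congr rfl fun k _ => ?_
  simp only [Function.Embedding.trans_apply, Nat.castEmbedding_apply, addLeftEmbedding_apply,
    neg_add_eq_sub, add_sub_cancel, Int.toNat_natCast]
  rw [mul_right_comm, pow_choose_two_mul_pow_eq_jacobiTerm_sub hq hz, mul_assoc]

def truncatedJacobiTerm (q z : K) (m : ℕ) (t : ℤ) : K :=
  if t.natAbs ≤ m then jacobiTerm q z t * qBinom q (2 * m) (m + t).toNat else 0

end Algebra

section Analysis

lemma summable_norm_of_norm_succ_le {E : Type*} [SeminormedAddCommGroup E] {f : ℕ → E}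
    {c r : ℝ} (hr0 : 0 ≤ r) (hr1 : r < 1) (hf : ∀ n, ‖f (n + 1)‖ ≤ c * r ^ n * ‖f n‖) :
    Summable fun n => ‖f n‖ := by
  have hc : Tendsto (fun n => c * r ^ n) atTop (𝓝 0) := by
    simpa using (tendsto_pow_atTop_nhds_zero_of_lt_one hr0 hr1).const_mul c
  refine summable_of_ratio_norm_eventually_le (r := 1 / 2) (by norm_num) ?_
  filter_upwards [hc.eventually_le_const (by norm_num : (0 : ℝ) < 1 / 2)] with n hn
  rw [norm_norm, norm_norm]
  exact (hf n).trans (mul_le_mul_of_nonneg_right hn (norm_nonneg _))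

variable {𝕜 : Type*} [NormedField 𝕜] {q : 𝕜}

lemma norm_qBinom_le (q : 𝕜) : ∀ n k : ℕ, ‖qBinom q n k‖ ≤ qBinom ‖q‖ n k
  | _, 0 => by simp
  | 0, _ + 1 => by simp [qBinom]
  | n + 1, k + 1 => by
    rw [qBinom_succ_succ, qBinom_succ_succ]
    calc _ ≤ ‖q‖ ^ (k + 1) * ‖qBinom q n (k + 1)‖ + ‖qBinom q n k‖ := by
          grw [norm_add_le, norm_mul, norm_pow]
      _ ≤ _ := by gcongr <;> exact norm_qBinom_le q _ _

lemma one_sub_pow_succ_ne_zero (hq : ‖q‖ < 1) (n : ℕ) : 1 - q ^ (n + 1) ≠ 0 := by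
  rw [sub_ne_zero]
  intro h
  have := congrArg norm h
  rw [norm_one, norm_pow] at this
  exact (pow_lt_one₀ (norm_nonneg q) hq n.succ_ne_zero).ne this.symm

lemma qPochhammer_ne_zero (hq : ‖q‖ < 1) (n : ℕ) : qPochhammer q n ≠ 0 :=
  prod_ne_zero_iff.2 fun j _ => one_sub_pow_succ_ne_zero hq j

lemma multipliable_one_sub_mul_pow [CompleteSpace 𝕜] (c : 𝕜) (hq : ‖q‖ < 1) :
    Multipliable fun n : ℕ => 1 - c * q ^ n := by
  have hs : Summable fun n : ℕ => ‖-(c * q ^ n)‖ := by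
    simpa [norm_mul, norm_pow] using
      (summable_geometric_of_lt_one (norm_nonneg q) hq).mul_left ‖c‖
  simpa [sub_eq_add_neg] using multipliable_one_add_of_summable hs

lemma multipliable_one_sub_pow_succ [CompleteSpace 𝕜] (hq : ‖q‖ < 1) :
    Multipliable fun n : ℕ => 1 - q ^ (n + 1) :=
  (multipliable_one_sub_mul_pow q hq).congr fun n => by rw [pow_succ']

lemma tendsto_qPochhammer [CompleteSpace 𝕜] (hq : ‖q‖ < 1) :
    Tendsto (qPochhammer q) atTop (𝓝 (∏' n : ℕ, (1 - q ^ (n + 1)))) :=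
  (multipliable_one_sub_pow_succ hq).hasProd.tendsto_prod_nat

lemma tprod_one_sub_pow_succ_ne_zero [CompleteSpace 𝕜] (hq : ‖q‖ < 1) :
    ∏' n : ℕ, (1 - q ^ (n + 1)) ≠ 0 := by
  simp_rw [sub_eq_add_neg]
  refine tprod_one_add_ne_zero_of_summable (fun n => ?_) ?_
  · simpa [← sub_eq_add_neg] using one_sub_pow_succ_ne_zero hq n
  · simpa [norm_pow, pow_succ'] using
      (summable_geometric_of_lt_one (norm_nonneg q) hq).mul_left ‖q‖

theorem tendsto_qBinom [CompleteSpace 𝕜] (hq : ‖q‖ < 1) {ι : Type*} {l : Filter ι}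
    {a b : ι → ℕ} (ha : Tendsto a l atTop) (hb : Tendsto b l atTop) :
    Tendsto (fun i => qBinom q (a i + b i) (a i)) l (𝓝 (∏' n : ℕ, (1 - q ^ (n + 1)))⁻¹) := by
  set L := ∏' n : ℕ, (1 - q ^ (n + 1))
  have hL : L ≠ 0 := tprod_one_sub_pow_succ_ne_zero hq
  have hP := tendsto_qPochhammer hq
  have key := (hP.comp (ha.atTop_add_atTop hb)).div ((hP.comp ha).mul (hP.comp hb))
    (mul_ne_zero hL hL)
  rw [show L / (L * L) = L⁻¹ by field_simp] at key
  refine key.congr fun i => ?_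
  simp only [Pi.div_apply, Function.comp_apply]
  rw [div_eq_iff (mul_ne_zero (qPochhammer_ne_zero hq _) (qPochhammer_ne_zero hq _)),
    ← qBinom_mul_qPochhammer, mul_assoc]

theorem qBinom_le_inv_tprod {r : ℝ} (hr0 : 0 ≤ r) (hr1 : r < 1) (n k : ℕ) :
    qBinom r n k ≤ (∏' j : ℕ, (1 - r ^ (j + 1)))⁻¹ := by
  have hr : ‖r‖ < 1 := by rwa [Real.norm_of_nonneg hr0]
  have hfac (j : ℕ) : 0 < 1 - r ^ (j + 1) := sub_pos.2 (pow_lt_one₀ hr0 hr1 j.succ_ne_zero)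
  have hpos (n : ℕ) : 0 < qPochhammer r n := prod_pos fun j _ => hfac j
  have hanti : Antitone (qPochhammer r) := antitone_nat_of_succ_le fun n => by
    rw [qPochhammer_succ]
    exact mul_le_of_le_one_right (hpos n).le (sub_le_self _ (by positivity))
  have hL : 0 < ∏' j : ℕ, (1 - r ^ (j + 1)) :=
    (tprod_nonneg fun j => (hfac j).le).lt_of_ne (tprod_one_sub_pow_succ_ne_zero hr).symm
  rcases le_or_gt k n with hkn | hkn
  · obtain ⟨b, rfl⟩ := Nat.exists_eq_add_of_le hkn
    have h := qBinom_mul_qPochhammer r k b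
    calc qBinom r (k + b) k ≤ (qPochhammer r b)⁻¹ := by
          rw [← one_div, le_div_iff₀ (hpos b)]
          nlinarith [hpos k, hanti (Nat.le_add_right k b)]
      _ ≤ _ := inv_anti₀ hL (hanti.le_of_tendsto (tendsto_qPochhammer hr) b)
  · rw [qBinom_eq_zero_of_lt r hkn]
    positivity

lemma summable_norm_jacobiTerm (hq : ‖q‖ < 1) (z : 𝕜) :
    Summable fun t => ‖jacobiTerm q z t‖ := by
  refine Summable.of_nat_of_neg ?_ ?_
  · refine summable_norm_of_norm_succ_le (c := ‖z‖) (norm_nonneg q) hq fun n => ?_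
    rw [Nat.cast_succ, jacobiTerm_natCast_add_one, norm_mul, norm_mul, norm_neg, norm_pow]
  · refine summable_norm_of_norm_succ_le (c := ‖z‖⁻¹ * ‖q‖) (norm_nonneg q) hq fun n => ?_
    rw [Nat.cast_succ, neg_add', jacobiTerm_neg_natCast_sub_one, norm_mul, norm_mul, norm_neg,
      norm_inv, norm_pow, pow_succ']
    exact le_of_eq (by ring)

lemma tsum_truncatedJacobiTerm {z : 𝕜} (hq0 : q ≠ 0) (hz : z ≠ 0) (m : ℕ) :
    ∑' t, truncatedJacobiTerm q z m t =
      ∏ j ∈ range m, ((1 - z * q ^ j) * (1 - z⁻¹ * q ^ (j + 1))) := by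
  rw [tsum_eq_sum (f := truncatedJacobiTerm q z m) (s := Icc (-(m : ℤ)) m)
      fun t ht => if_neg (by rw [mem_Icc] at ht; omega),
    prod_range_eq_sum_jacobiTerm_mul_qBinom hq0 hz]
  exact sum_congr rfl fun t ht => if_pos (by rw [mem_Icc] at ht; omega)

lemma norm_truncatedJacobiTerm_le (hq : ‖q‖ < 1) (z : 𝕜) (m : ℕ) (t : ℤ) :
    ‖truncatedJacobiTerm q z m t‖ ≤ (∏' j : ℕ, (1 - ‖q‖ ^ (j + 1)))⁻¹ * ‖jacobiTerm q z t‖ := by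
  unfold truncatedJacobiTerm
  split_ifs
  · rw [norm_mul, mul_comm]
    gcongr
    exact (norm_qBinom_le q _ _).trans (qBinom_le_inv_tprod (norm_nonneg q) hq _ _)
  · rw [norm_zero]
    have hfac (j : ℕ) : 0 ≤ 1 - ‖q‖ ^ (j + 1) := sub_nonneg.2 (pow_le_one₀ (norm_nonneg q) hq.le)
    exact mul_nonneg (inv_nonneg.2 (tprod_nonneg hfac)) (norm_nonneg _)

lemma tendsto_truncatedJacobiTerm [CompleteSpace 𝕜] (hq : ‖q‖ < 1) (z : 𝕜) (t : ℤ) :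
    Tendsto (fun m => truncatedJacobiTerm q z m t) atTop
      (𝓝 (jacobiTerm q z t * (∏' n : ℕ, (1 - q ^ (n + 1)))⁻¹)) := by
  have ha : Tendsto (fun m : ℕ => ((m : ℤ) + t).toNat) atTop atTop :=
    tendsto_atTop_atTop.2 fun b => ⟨b + t.natAbs, fun m hm => by omega⟩
  have hb : Tendsto (fun m : ℕ => ((m : ℤ) - t).toNat) atTop atTop :=
    tendsto_atTop_atTop.2 fun b => ⟨b + t.natAbs, fun m hm => by omega⟩
  refine ((tendsto_qBinom hq ha hb).const_mul (jacobiTerm q z t)).congr' ?_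
  filter_upwards [eventually_ge_atTop t.natAbs] with m hm
  rw [truncatedJacobiTerm, if_pos hm,
    show ((m : ℤ) + t).toNat + ((m : ℤ) - t).toNat = 2 * m by omega]

theorem tendsto_prod_range_jacobi [CompleteSpace 𝕜] {z : 𝕜} (hq : ‖q‖ < 1) (hq0 : q ≠ 0)
    (hz : z ≠ 0) :
    Tendsto (fun m => ∏ j ∈ range m, ((1 - z * q ^ j) * (1 - z⁻¹ * q ^ (j + 1)))) atTop
      (𝓝 ((∑' t, jacobiTerm q z t) * (∏' n : ℕ, (1 - q ^ (n + 1)))⁻¹)) := by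
  rw [← tsum_mul_right]
  exact (tendsto_tsum_of_dominated_convergence ((summable_norm_jacobiTerm hq z).mul_left _)
    (tendsto_truncatedJacobiTerm hq z) (.of_forall (norm_truncatedJacobiTerm_le hq z))).congr
    (tsum_truncatedJacobiTerm hq0 hz)

lemma tprod_jacobi_zero (z : 𝕜) :
    ∏' n : ℕ, ((1 - z * (0 : 𝕜) ^ n) * (1 - z⁻¹ * 0 ^ (n + 1)) * (1 - 0 ^ (n + 1))) = 1 - z := by
  rw [tprod_eq_prod (s := {0}) fun n hn => by simp [mem_singleton.not.1 hn]]
  simp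

lemma tsum_jacobiTerm_zero (z : 𝕜) : ∑' t, jacobiTerm 0 z t = 1 - z := by
  rw [tsum_eq_sum (s := {0, 1}) fun t ht => ?_]
  · simp [jacobiTerm, sub_eq_add_neg]
  · have : 2 ≤ t * (t - 1) := by
      simp only [mem_insert, mem_singleton, not_or] at ht
      rcases le_or_gt t (-1) with h | h
      · nlinarith
      · nlinarith [show 2 ≤ t by omega]
    rw [jacobiTerm, zero_pow (by omega), mul_zero]

end Analysis

/-- Jacobi's triple product identity: for `‖q‖ < 1` and `z ≠ 0`,
`∏_{n≥1}(1 - z q^{n-1})(1 - z⁻¹ q^n)(1 - q^n) = ∑_{n∈ℤ} (-1)^n z^n q^{n(n-1)/2}`. -/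
theorem jacobi_triple_product (q z : ℂ) (hq : ‖q‖ < 1) (hz : z ≠ 0) :
    ∏' n : ℕ, ((1 - z * q ^ n) * (1 - z⁻¹ * q ^ (n + 1)) * (1 - q ^ (n + 1))) =
      ∑' n : ℤ, ((-1 : ℂ) ^ n * z ^ n * q ^ ((n * (n - 1)) / 2).toNat) := by
  rcases eq_or_ne q 0 with rfl | hq0
  · exact (tprod_jacobi_zero z).trans (tsum_jacobiTerm_zero z).symm
  have hA := multipliable_one_sub_mul_pow z hq
  have hB : Multipliable fun n : ℕ => 1 - z⁻¹ * q ^ (n + 1) :=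
    (multipliable_one_sub_mul_pow (z⁻¹ * q) hq).congr fun n => by ring
  rw [(hA.mul hB).tprod_mul (multipliable_one_sub_pow_succ hq),
    tendsto_nhds_unique (hA.mul hB).hasProd.tendsto_prod_nat (tendsto_prod_range_jacobi hq hq0 hz),
    inv_mul_cancel_right₀ (tprod_one_sub_pow_succ_ne_zero hq)]
  rfl
end

section
/- Theta function identity: θ3(q)^4 = θ2(q)^4 + θ4(q)^4, where θ2(q) = ∑_{n∈ℤ} q^((n+1/2)^2) = 2q^(1/4)∑_{n≥0} q^(n(n+1)), θ3(q) = ∑_{n∈ℤ} q^(n^2), θ4(q) = ∑_{n∈ℤ} (-1)^n q^(n^2). -/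
open Function Set

namespace ThetaAux

lemma tri_nonneg (n : ℤ) : (0:ℤ) ≤ n * (n + 1) := Int.mul_nonneg_iff.mpr (by omega)

lemma he_sq (n : ℤ) : n.natAbs ≤ (n ^ 2).toNat + 1 := by
  have h1 : (n.natAbs : ℤ) * n.natAbs = n * n := Int.natAbs_mul_self' n
  have h4 : n ≤ (n.natAbs : ℤ) := Int.le_natAbs
  have h5 : (0:ℤ) ≤ n.natAbs := Int.ofNat_nonneg _
  have h2 : (n.natAbs : ℤ) ≤ n ^ 2 + 1 := by nlinarith
  have h3 : (0:ℤ) ≤ n ^ 2 := sq_nonneg n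
  omega

lemma he_two_sq (n : ℤ) : n.natAbs ≤ (2 * n ^ 2).toNat + 1 := by
  have := he_sq n
  have h3 : (0:ℤ) ≤ n ^ 2 := sq_nonneg n
  omega

lemma he_tri (n : ℤ) : n.natAbs ≤ (n * (n + 1)).toNat + 1 := by
  have h1 : (n.natAbs : ℤ) * n.natAbs = n * n := Int.natAbs_mul_self' n
  have h4 : n ≤ (n.natAbs : ℤ) := Int.le_natAbs
  have h5 : (0:ℤ) ≤ n.natAbs := Int.ofNat_nonneg _
  have h2 : (n.natAbs : ℤ) ≤ n * (n + 1) + 1 := by nlinarith [sq_nonneg (n + 1), sq_nonneg n]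
  have h3 := tri_nonneg n
  omega

lemma he_two_tri (n : ℤ) : n.natAbs ≤ (2 * (n * (n + 1))).toNat + 1 := by
  have := he_tri n
  have h3 := tri_nonneg n
  omega

lemma summable_norm_aux {q : ℂ} (hq : ‖q‖ < 1) (e : ℤ → ℤ)
    (he : ∀ n : ℤ, n.natAbs ≤ (e n).toNat + 1) :
    Summable fun n : ℤ => ‖q ^ (e n).toNat‖ := by
  have h0 : (0:ℝ) ≤ ‖q‖ := norm_nonneg q
  have hgeo : Summable fun n : ℕ => ‖q‖ ^ (n - 1) := by
    refine (summable_nat_add_iff 1).mp ?_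
    simpa using summable_geometric_of_lt_one h0 hq
  have hmaj : Summable fun n : ℤ => ‖q‖ ^ (n.natAbs - 1) := by
    apply Summable.of_nat_of_neg
    · simpa using hgeo
    · simpa using hgeo
  refine Summable.of_nonneg_of_le (fun n => norm_nonneg _) (fun n => ?_) hmaj
  rw [norm_pow]
  exact pow_le_pow_of_le_one h0 hq.le (by have := he n; omega)

lemma tsum_split (f : ℤ × ℤ → ℂ) (hf : Summable f) :
    ∑' p : ℤ × ℤ, f p =
      (∑' p : ℤ × ℤ, f (p.1 + p.2, p.1 - p.2)) +
        ∑' p : ℤ × ℤ, f (p.1 + p.2 + 1, p.1 - p.2) := by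
  set E1 : ℤ × ℤ → ℤ × ℤ := fun p => (p.1 + p.2, p.1 - p.2) with hE1
  set E2 : ℤ × ℤ → ℤ × ℤ := fun p => (p.1 + p.2 + 1, p.1 - p.2) with hE2
  have inj1 : Injective E1 := by
    rintro ⟨a, b⟩ ⟨c, d⟩ h
    simp only [hE1, Prod.mk.injEq] at h
    simp only [Prod.mk.injEq]
    omega
  have inj2 : Injective E2 := by
    rintro ⟨a, b⟩ ⟨c, d⟩ h
    simp only [hE2, Prod.mk.injEq] at h
    simp only [Prod.mk.injEq]
    omega
  have hr1 : range E1 = {p : ℤ × ℤ | (p.1 + p.2) % 2 = 0} := by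
    ext ⟨m, n⟩
    simp only [hE1, mem_range, Prod.mk.injEq, mem_setOf_eq, Prod.exists]
    constructor
    · rintro ⟨a, b, h1, h2⟩; omega
    · intro h; exact ⟨(m + n) / 2, (m - n) / 2, by omega, by omega⟩
  have hr2 : range E2 = {p : ℤ × ℤ | (p.1 + p.2) % 2 = 0}ᶜ := by
    ext ⟨m, n⟩
    simp only [hE2, mem_range, Prod.mk.injEq, mem_compl_iff, mem_setOf_eq, Prod.exists]
    constructor
    · rintro ⟨a, b, h1, h2⟩; omega
    · intro h; exact ⟨(m + n - 1) / 2, (m - n) / 2, by omega, by omega⟩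
  have hcompl : IsCompl (range E1) (range E2) := by
    rw [hr1, hr2]; exact isCompl_compl
  have h1 : HasSum (f ∘ (↑) : range E1 → ℂ) (∑' p, f (E1 p)) :=
    inj1.hasSum_range_iff.mpr (hf.comp_injective inj1).hasSum
  have h2 : HasSum (f ∘ (↑) : range E2 → ℂ) (∑' p, f (E2 p)) :=
    inj2.hasSum_range_iff.mpr (hf.comp_injective inj2).hasSum
  exact (h1.add_isCompl hcompl h2).tsum_eq

lemma tsum_split' (f g h : ℤ × ℤ → ℂ) (hf : Summable f)
    (hg : ∀ a b : ℤ, f (a + b, a - b) = g (a, b))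
    (hh : ∀ a b : ℤ, f (a + b + 1, a - b) = h (a, b)) :
    ∑' p : ℤ × ℤ, f p = (∑' p : ℤ × ℤ, g p) + ∑' p : ℤ × ℤ, h p := by
  rw [tsum_split f hf]
  congr 1
  · exact tsum_congr fun p => by simpa using hg p.1 p.2
  · exact tsum_congr fun p => by simpa using hh p.1 p.2

end ThetaAux

open ThetaAux in
/-- Jacobi's theta identity `θ₃(q)⁴ = θ₂(q)⁴ + θ₄(q)⁴`, written using
`θ₂(q)⁴ = 16·q·(∑_{n≥0} q^{n(n+1)})⁴` to avoid fractional powers: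
`(∑_{n∈ℤ} q^{n²})⁴ = 16·q·(∑_{n≥0} q^{n(n+1)})⁴ + (∑_{n∈ℤ} (-1)^n q^{n²})⁴`. -/
theorem theta_fourth_power_identity (q : ℂ) (hq : ‖q‖ < 1) :
    (∑' n : ℤ, q ^ (n ^ 2).toNat) ^ 4 =
      16 * q * (∑' n : ℕ, q ^ (n * (n + 1))) ^ 4 +
        (∑' n : ℤ, (-1 : ℂ) ^ n * q ^ (n ^ 2).toNat) ^ 4 := by
  have hne : (-1 : ℂ) ≠ 0 := by norm_num
  have Qadd : ∀ {j k : ℤ}, 0 ≤ j → 0 ≤ k →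
      q ^ (j + k).toNat = q ^ j.toNat * q ^ k.toNat := by
    intro j k hj hk
    rw [Int.toNat_add hj hk, pow_add]
  set f3 : ℤ → ℂ := fun n => q ^ (n ^ 2).toNat with hf3
  set f4 : ℤ → ℂ := fun n => (-1 : ℂ) ^ n * q ^ (n ^ 2).toNat with hf4
  set fE : ℤ → ℂ := fun n => q ^ (2 * n ^ 2).toNat with hfE
  set fP : ℤ → ℂ := fun n => q ^ (2 * (n * (n + 1))).toNat with hfP
  set fS : ℤ → ℂ := fun n => q ^ (n * (n + 1)).toNat with hfS
  have s3 : Summable fun n : ℤ => ‖f3 n‖ := summable_norm_aux hq _ he_sq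
  have sE : Summable fun n : ℤ => ‖fE n‖ := summable_norm_aux hq _ he_two_sq
  have sP : Summable fun n : ℤ => ‖fP n‖ := summable_norm_aux hq _ he_two_tri
  have sS : Summable fun n : ℤ => ‖fS n‖ := summable_norm_aux hq _ he_tri
  have s4 : Summable fun n : ℤ => ‖f4 n‖ := by
    have : (fun n : ℤ => ‖f4 n‖) = fun n : ℤ => ‖f3 n‖ := by
      funext n
      simp [hf4, hf3, norm_mul, norm_zpow]
    rw [this]; exact s3
  have sE1 : Summable fun n : ℤ => ‖fE (n + 1)‖ :=
    sE.comp_injective (add_left_injective (1 : ℤ))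
  set T3 := ∑' n : ℤ, f3 n with hT3
  set T4 := ∑' n : ℤ, f4 n with hT4
  set E := ∑' n : ℤ, fE n with hE
  set P := ∑' n : ℤ, fP n with hP
  set S := ∑' n : ℤ, fS n with hS
  set ps := ∑' n : ℕ, q ^ (n * (n + 1)) with hps
  have nn2sq : ∀ a : ℤ, (0:ℤ) ≤ 2 * a ^ 2 := fun a => by positivity
  have nn2tri : ∀ a : ℤ, (0:ℤ) ≤ 2 * (a * (a + 1)) := fun a => by
    have := tri_nonneg a; omega
  have sign1 : ∀ a b : ℤ, (-1:ℂ) ^ (a + b) * (-1:ℂ) ^ (a - b) = 1 := by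
    intro a b
    rw [← zpow_add₀ hne, show a + b + (a - b) = 2 * a by ring, zpow_mul,
      show ((-1:ℂ)) ^ (2:ℤ) = 1 by norm_num, one_zpow]
  have sign2 : ∀ a b : ℤ, (-1:ℂ) ^ (a + b + 1) * (-1:ℂ) ^ (a - b) = -1 := by
    intro a b
    rw [← zpow_add₀ hne, show a + b + 1 + (a - b) = 2 * a + 1 by ring, zpow_add₀ hne,
      zpow_mul, show ((-1:ℂ)) ^ (2:ℤ) = 1 by norm_num, one_zpow, one_mul, zpow_one]
  -- pointwise identities
  have p3a : ∀ a b : ℤ, f3 (a + b) * f3 (a - b) = fE a * fE b := by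
    intro a b
    show q ^ (((a+b) ^ 2).toNat) * q ^ (((a-b) ^ 2).toNat)
        = q ^ ((2 * a ^ 2).toNat) * q ^ ((2 * b ^ 2).toNat)
    rw [← Qadd (sq_nonneg (a+b)) (sq_nonneg (a-b)), ← Qadd (nn2sq a) (nn2sq b),
      show ((a+b) ^ 2 + (a-b) ^ 2 : ℤ) = 2 * a ^ 2 + 2 * b ^ 2 by ring]
  have p3b : ∀ a b : ℤ, f3 (a + b + 1) * f3 (a - b) = q * (fP a * fP b) := by
    intro a b
    show q ^ (((a+b+1) ^ 2).toNat) * q ^ (((a-b) ^ 2).toNat)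
        = q * (q ^ ((2 * (a * (a+1))).toNat) * q ^ ((2 * (b * (b+1))).toNat))
    rw [← Qadd (sq_nonneg (a+b+1)) (sq_nonneg (a-b)), ← Qadd (nn2tri a) (nn2tri b),
      show ((a+b+1) ^ 2 + (a-b) ^ 2 : ℤ) = 1 + (2 * (a * (a+1)) + 2 * (b * (b+1))) by ring,
      Qadd (by norm_num : (0:ℤ) ≤ 1)
        (by have := nn2tri a; have := nn2tri b; omega : (0:ℤ) ≤ 2 * (a * (a+1)) + 2 * (b * (b+1)))]
    norm_num
  have p4a : ∀ a b : ℤ, f4 (a + b) * f4 (a - b) = fE a * fE b := by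
    intro a b
    show ((-1:ℂ) ^ (a+b) * q ^ (((a+b) ^ 2).toNat)) * ((-1:ℂ) ^ (a-b) * q ^ (((a-b) ^ 2).toNat))
        = fE a * fE b
    rw [mul_mul_mul_comm, sign1 a b, one_mul]
    exact p3a a b
  have p4b : ∀ a b : ℤ, f4 (a + b + 1) * f4 (a - b) = -(q * (fP a * fP b)) := by
    intro a b
    show ((-1:ℂ) ^ (a+b+1) * q ^ (((a+b+1) ^ 2).toNat)) * ((-1:ℂ) ^ (a-b) * q ^ (((a-b) ^ 2).toNat))
        = -(q * (fP a * fP b))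
    rw [mul_mul_mul_comm, sign2 a b, neg_one_mul, neg_inj]
    exact p3b a b
  have pSa : ∀ a b : ℤ, fS (a + b) * fS (a - b) = fP a * fE b := by
    intro a b
    show q ^ (((a+b) * ((a+b) + 1)).toNat) * q ^ (((a-b) * ((a-b) + 1)).toNat)
        = q ^ ((2 * (a * (a+1))).toNat) * q ^ ((2 * b ^ 2).toNat)
    rw [← Qadd (tri_nonneg (a+b)) (tri_nonneg (a-b)), ← Qadd (nn2tri a) (nn2sq b),
      show ((a+b) * ((a+b) + 1) + (a-b) * ((a-b) + 1) : ℤ)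
        = 2 * (a * (a+1)) + 2 * b ^ 2 by ring]
  have pSb : ∀ a b : ℤ, fS (a + b + 1) * fS (a - b) = fE (a + 1) * fP b := by
    intro a b
    show q ^ (((a+b+1) * ((a+b+1) + 1)).toNat) * q ^ (((a-b) * ((a-b) + 1)).toNat)
        = q ^ ((2 * (a+1) ^ 2).toNat) * q ^ ((2 * (b * (b+1))).toNat)
    rw [← Qadd (tri_nonneg (a+b+1)) (tri_nonneg (a-b)), ← Qadd (nn2sq (a+1)) (nn2tri b),
      show ((a+b+1) * ((a+b+1) + 1) + (a-b) * ((a-b) + 1) : ℤ)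
        = 2 * (a+1) ^ 2 + 2 * (b * (b+1)) by ring]
  -- identity A : T3 ^ 2 = E ^ 2 + q * P ^ 2
  have stepA : T3 * T3 = (∑' p : ℤ × ℤ, fE p.1 * fE p.2)
      + ∑' p : ℤ × ℤ, q * (fP p.1 * fP p.2) :=
    (tsum_mul_tsum_of_summable_norm s3 s3).trans
      (tsum_split' _ _ _ (summable_mul_of_summable_norm s3 s3)
        (fun a b => p3a a b) (fun a b => p3b a b))
  have eEE : (∑' p : ℤ × ℤ, fE p.1 * fE p.2) = E * E :=
    (tsum_mul_tsum_of_summable_norm sE sE).symm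
  have ePP : (∑' p : ℤ × ℤ, q * (fP p.1 * fP p.2)) = q * (P * P) := by
    rw [tsum_mul_left]
    exact congrArg (q * ·) (tsum_mul_tsum_of_summable_norm sP sP).symm
  have hA : T3 ^ 2 = E ^ 2 + q * P ^ 2 := by
    rw [sq, sq, sq, stepA, eEE, ePP]
  -- identity B : T4 ^ 2 = E ^ 2 - q * P ^ 2
  have stepB : T4 * T4 = (∑' p : ℤ × ℤ, fE p.1 * fE p.2)
      + ∑' p : ℤ × ℤ, -(q * (fP p.1 * fP p.2)) :=
    (tsum_mul_tsum_of_summable_norm s4 s4).trans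
      (tsum_split' _ _ _ (summable_mul_of_summable_norm s4 s4)
        (fun a b => p4a a b) (fun a b => p4b a b))
  have hB : T4 ^ 2 = E ^ 2 - q * P ^ 2 := by
    rw [sq, sq, sq, stepB, eEE, tsum_neg, ePP]
    ring
  -- identity C : S ^ 2 = P * E + E * P
  have stepC : S * S = (∑' p : ℤ × ℤ, fP p.1 * fE p.2)
      + ∑' p : ℤ × ℤ, fE (p.1 + 1) * fP p.2 :=
    (tsum_mul_tsum_of_summable_norm sS sS).trans
      (tsum_split' _ _ _ (summable_mul_of_summable_norm sS sS)
        (fun a b => pSa a b) (fun a b => pSb a b))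
  have ePE : (∑' p : ℤ × ℤ, fP p.1 * fE p.2) = P * E :=
    (tsum_mul_tsum_of_summable_norm sP sE).symm
  have eEP : (∑' p : ℤ × ℤ, fE (p.1 + 1) * fP p.2) = E * P := by
    refine (tsum_mul_tsum_of_summable_norm sE1 sP).symm.trans ?_
    congr 1
    simpa using (Equiv.addRight (1 : ℤ)).tsum_eq fE
  have hC : S ^ 2 = P * E + E * P := by
    rw [sq, stepC, ePE, eEP]
  -- identity D : S = 2 * ps
  have hD : S = 2 * ps := by
    have h1 : Summable fun n : ℕ => fS n := sS.of_norm.comp_injective Nat.cast_injective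
    have h2 : Summable fun n : ℕ => fS (-(n + 1)) := by
      refine sS.of_norm.comp_injective fun a b h => ?_
      have : -((a:ℤ) + 1) = -((b:ℤ) + 1) := h
      omega
    rw [hS, tsum_of_nat_of_neg_add_one h1 h2]
    have e1 : ∀ n : ℕ, fS n = q ^ (n * (n + 1)) := by
      intro n
      show q ^ (((n:ℤ) * ((n:ℤ) + 1)).toNat) = q ^ (n * (n + 1))
      rw [show ((n:ℤ) * ((n:ℤ) + 1)) = ((n * (n + 1) : ℕ) : ℤ) by push_cast; ring,
        Int.toNat_natCast]
    have e2 : ∀ n : ℕ, fS (-(n + 1)) = q ^ (n * (n + 1)) := by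
      intro n
      show q ^ ((-((n:ℤ) + 1) * (-((n:ℤ) + 1) + 1)).toNat) = q ^ (n * (n + 1))
      rw [show (-((n:ℤ) + 1) * (-((n:ℤ) + 1) + 1)) = ((n * (n + 1) : ℕ) : ℤ) by push_cast; ring,
        Int.toNat_natCast]
    rw [tsum_congr e1, tsum_congr e2]
    ring
  -- combine
  linear_combination (T3 ^ 2 + E ^ 2 + q * P ^ 2) * hA - (T4 ^ 2 + E ^ 2 - q * P ^ 2) * hB -
    q * (S ^ 2 + P * E + E * P) * hC + q * (S + 2 * ps) * (S ^ 2 + 4 * ps ^ 2) * hD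
end

section
/- Two cusps a/c and a'/c' (with gcd(a,c)=gcd(a',c')=1) are equivalent under Γ₁(N) if and only if (a', c') ≡ ±(a + nc, c) (mod N) for some integer n. -/
open scoped MatrixGroups

private lemma gamma1_construct (N : ℕ) (a c a' c' n : ℤ)
    (h : IsCoprime a c) (h' : IsCoprime a' c')
    (Ha : a' ≡ a + n * c [ZMOD (N : ℤ)]) (Hc : c' ≡ c [ZMOD (N : ℤ)]) :
    ∃ γ ∈ CongruenceSubgroup.Gamma1 N,
      γ 0 0 * a + γ 0 1 * c = a' ∧ γ 1 0 * a + γ 1 1 * c = c' := by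
  obtain ⟨u, v, huv⟩ := h.add_mul_right_left n
  -- huv : u * (a + n * c) + v * c = 1
  obtain ⟨u', v', huv'⟩ := h'
  -- huv' : u' * a' + v' * c' = 1
  have hS1 : (!![a', -v' - (v * u' - u * v') * a'; c', u' - (v * u' - u * v') * c'] :
      Matrix (Fin 2) (Fin 2) ℤ).det = 1 := by
    simp [Matrix.det_fin_two_of]; linear_combination huv'
  have hS2 : (!![u, u * n + v; -c, a] : Matrix (Fin 2) (Fin 2) ℤ).det = 1 := by
    simp [Matrix.det_fin_two_of]; linear_combination huv
  set S1 : SL(2, ℤ) := ⟨_, hS1⟩ with hS1def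
  set S2 : SL(2, ℤ) := ⟨_, hS2⟩ with hS2def
  have hent : ∀ i j, (S1 * S2) i j =
      (!![a', -v' - (v * u' - u * v') * a'; c', u' - (v * u' - u * v') * c'] *
        !![u, u * n + v; -c, a]) i j := by
    intro i j; rfl
  have rHa : ((a' : ZMod N)) = ((a : ZMod N) + (n : ZMod N) * (c : ZMod N)) := by
    have := (ZMod.intCast_eq_intCast_iff _ _ _).mpr Ha
    push_cast at this ⊢; exact this
  have rHc : ((c' : ZMod N)) = ((c : ZMod N)) := by
    exact_mod_cast (ZMod.intCast_eq_intCast_iff _ _ _).mpr Hc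
  have r1 : (u : ZMod N) * ((a : ZMod N) + (n : ZMod N) * c) + (v : ZMod N) * c = 1 := by
    have : ((u * (a + n * c) + v * c : ℤ) : ZMod N) = ((1 : ℤ) : ZMod N) := by rw [huv]
    push_cast at this; linear_combination this
  have r2 : (u' : ZMod N) * ((a : ZMod N) + (n : ZMod N) * c) + (v' : ZMod N) * c = 1 := by
    have : ((u' * a' + v' * c' : ℤ) : ZMod N) = ((1 : ℤ) : ZMod N) := by rw [huv']
    push_cast at this; rw [rHa, rHc] at this; linear_combination this
  have E00 : (S1 * S2) 0 0 = a' * u + (v' + (v * u' - u * v') * a') * c := by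
    rw [hent 0 0]; simp [Matrix.mul_apply, Fin.sum_univ_two]; try ring
  have E01 : (S1 * S2) 0 1 = a' * (u * n + v) + (-v' - (v * u' - u * v') * a') * a := by
    rw [hent 0 1]; simp [Matrix.mul_apply, Fin.sum_univ_two]; try ring
  have E10 : (S1 * S2) 1 0 = c' * u - (u' - (v * u' - u * v') * c') * c := by
    rw [hent 1 0]; simp [Matrix.mul_apply, Fin.sum_univ_two]; try ring
  have E11 : (S1 * S2) 1 1 = c' * (u * n + v) + (u' - (v * u' - u * v') * c') * a := by
    rw [hent 1 1]; simp [Matrix.mul_apply, Fin.sum_univ_two]; try ring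
  refine ⟨S1 * S2, ?_, ?_, ?_⟩
  · rw [CongruenceSubgroup.Gamma1_mem]
    refine ⟨?_, ?_, ?_⟩
    · rw [E00]
      push_cast
      rw [rHa]
      linear_combination (((a : ZMod N) + n * c) * u') * r1 + (1 - ((a : ZMod N) + n * c) * u) * r2
    · rw [E11]
      push_cast
      rw [rHc]
      linear_combination (1 - (a : ZMod N) * u') * r1 + ((a : ZMod N) * u) * r2
    · rw [E10]
      push_cast
      rw [rHc]
      linear_combination ((c : ZMod N) * u') * r1 - ((c : ZMod N) * u) * r2
  · rw [E00, E01]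
    linear_combination a' * huv
  · rw [E10, E11]
    linear_combination c' * huv

/-- Cho–Koo–Park: two cusps `a/c` and `a'/c'` (in lowest terms, represented by
the coprime integer vectors `(a,c)`, `(a',c')`, with `∞ = ±1/0`) are equivalent
under `Γ₁(N)` if and only if `(a',c') ≡ ±(a + nc, c) (mod N)` for some `n ∈ ℤ`. -/
theorem cusp_equiv_Gamma1 (N : ℕ) (hN : 0 < N) (a c a' c' : ℤ)
    (h : IsCoprime a c) (h' : IsCoprime a' c') :
    (∃ γ ∈ CongruenceSubgroup.Gamma1 N,
      (γ 0 0 * a + γ 0 1 * c = a' ∧ γ 1 0 * a + γ 1 1 * c = c') ∨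
      (γ 0 0 * a + γ 0 1 * c = -a' ∧ γ 1 0 * a + γ 1 1 * c = -c')) ↔
    (∃ n : ℤ,
      (a' ≡ a + n * c [ZMOD (N : ℤ)] ∧ c' ≡ c [ZMOD (N : ℤ)]) ∨
      (a' ≡ -(a + n * c) [ZMOD (N : ℤ)] ∧ c' ≡ -c [ZMOD (N : ℤ)])) := by
  constructor
  · rintro ⟨γ, hγ, hcase⟩
    rw [CongruenceSubgroup.Gamma1_mem] at hγ
    obtain ⟨h00, h11, h10⟩ := hγ
    refine ⟨γ 0 1, ?_⟩
    rcases hcase with ⟨e1, e2⟩ | ⟨e1, e2⟩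
    · left
      constructor
      · rw [← ZMod.intCast_eq_intCast_iff]
        rw [← e1]; push_cast; rw [h00]; ring
      · rw [← ZMod.intCast_eq_intCast_iff]
        rw [← e2]; push_cast; rw [h10, h11]; ring
    · right
      constructor
      · rw [← ZMod.intCast_eq_intCast_iff]
        have : a' = -(γ 0 0 * a + γ 0 1 * c) := by linarith
        rw [this]; push_cast; rw [h00]; ring
      · rw [← ZMod.intCast_eq_intCast_iff]
        have : c' = -(γ 1 0 * a + γ 1 1 * c) := by linarith
        rw [this]; push_cast; rw [h10, h11]; ring
  · rintro ⟨n, ⟨Ha, Hc⟩ | ⟨Ha, Hc⟩⟩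
    · obtain ⟨γ, hγ, e1, e2⟩ := gamma1_construct N a c a' c' n h h' Ha Hc
      exact ⟨γ, hγ, Or.inl ⟨e1, e2⟩⟩
    · have Ha' : -a' ≡ a + n * c [ZMOD (N : ℤ)] := by
        have := Ha.neg; simpa using this
      have Hc' : -c' ≡ c [ZMOD (N : ℤ)] := by
        have := Hc.neg; simpa using this
      obtain ⟨γ, hγ, e1, e2⟩ := gamma1_construct N a c (-a') (-c') n h h'.neg_left.neg_right Ha' Hc'
      exact ⟨γ, hγ, Or.inr ⟨e1, e2⟩⟩
end

section
/- The width of the cusp a/c (gcd(a,c)=1) for the group Γ₁(N) equals 1 if N=4 and gcd(c,4)=2, and equals N/gcd(c,N) otherwise. -/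
/-!
Conjugating the translation by `σ = (a b; c d)` gives `(1 - ach, a²h; -c²h, 1 + ach)`.
With sign `+1` this lies in `Γ₁(N)` iff `N ∣ ach` and `N ∣ c²h`, i.e. (as `gcd(a, c) = 1`)
iff `N ∣ ch`, i.e. iff `N / gcd(c, N) ∣ h`. With sign `-1` the two diagonal congruences
`-(1 ∓ ach) ≡ 1` add up to `N ∣ 4`; for `N ∣ 4` the divisor `gcd(c, N)` is `1` or `N` (and
then `N ∣ c²h` again forces `N / gcd(c, N) ∣ h`) except when `N = 4` and `gcd(c, 4) = 2`.
In that exceptional case `c ≡ 2 (mod 4)` and `a` is odd, so `ac ≡ 2 (mod 4)` and `h = 1`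
already works with sign `-1`.
-/

theorem Nat.dvd_mul_iff_div_gcd_dvd {m n h : ℕ} (hn : 0 < n) :
    n ∣ m * h ↔ n / m.gcd n ∣ h := by
  have hg : 0 < m.gcd n := Nat.gcd_pos_of_pos_right m hn
  obtain ⟨m', n', hcop, hm, hn'⟩ := Nat.exists_coprime m n
  set g := m.gcd n
  rw [hm, hn', Nat.mul_div_cancel _ hg, mul_right_comm, Nat.mul_dvd_mul_iff_right hg,
    hcop.symm.dvd_mul_left]

theorem Int.natCast_dvd_mul_iff_div_gcd_dvd {c : ℤ} {n h : ℕ} (hn : 0 < n) :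
    (n : ℤ) ∣ c * h ↔ n / Int.gcd c n ∣ h := by
  rw [Int.natCast_dvd, Int.natAbs_mul, Int.natAbs_natCast, Int.gcd, Int.natAbs_natCast,
    Nat.dvd_mul_iff_div_gcd_dvd hn]

theorem IsCoprime.dvd_of_dvd_mul_of_dvd_mul {R : Type*} [CommRing R] {a c n x : R}
    (h : IsCoprime a c) (ha : n ∣ a * x) (hc : n ∣ c * x) : n ∣ x := by
  obtain ⟨u, v, huv⟩ := h
  have hx : x = u * (a * x) + v * (c * x) := by linear_combination -x * huv
  rw [hx]
  exact dvd_add (ha.mul_left u) (hc.mul_left v)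

theorem Nat.eq_one_or_eq_self_of_dvd_of_dvd_four {g n : ℕ} (hg : g ∣ n) (hn : n ∣ 4) :
    g = 1 ∨ g = n ∨ (n = 4 ∧ g = 2) := by
  have hn4 : n ≤ 4 := Nat.le_of_dvd (by norm_num) hn
  have hgn : g ≤ n := Nat.le_of_dvd (Nat.pos_of_dvd_of_pos hn (by norm_num)) hg
  interval_cases n <;> interval_cases g <;> simp_all

theorem Int.emod_four_eq_two_of_gcd_eq_two {c : ℤ} (hc : Int.gcd c 4 = 2) : c % 4 = 2 := by
  rw [← Int.gcd_emod] at hc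
  have h0 := Int.emod_nonneg c (by norm_num : (4 : ℤ) ≠ 0)
  have h4 := Int.emod_lt_of_pos c (by norm_num : (0 : ℤ) < 4)
  interval_cases hr : c % 4 <;> norm_num at hc
  rfl

section ConjugateTranslation

variable {N a b c d ε h : ℤ}

theorem conj_translation_eq (hdet : a * d - b * c = 1) :
    !![a, b; c, d] * !![1, h; 0, 1] * !![d, -b; -c, a] =
      !![1 - a * (c * h), a * (a * h); -(c * (c * h)), 1 + a * (c * h)] := by
  ext i j
  fin_cases i <;> fin_cases j <;> simp
  · linear_combination hdet
  · ring
  · ring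
  · linear_combination hdet

/-- `ε σ (1 h; 0 1) σ⁻¹ ∈ Γ₁(N)` for `σ = (a b; c d)`, with `σ⁻¹ = (d -b; -c a)`. -/
def ConjTranslationMemGamma1 (N a b c d ε h : ℤ) : Prop :=
  let M := ε • (!![a, b; c, d] * !![1, h; 0, 1] * !![d, -b; -c, a])
  M 0 0 ≡ 1 [ZMOD N] ∧ M 1 1 ≡ 1 [ZMOD N] ∧ M 1 0 ≡ 0 [ZMOD N]

theorem conjTranslationMemGamma1_iff (hdet : a * d - b * c = 1) :
    ConjTranslationMemGamma1 N a b c d ε h ↔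
      ε * (1 - a * (c * h)) ≡ 1 [ZMOD N] ∧ ε * (1 + a * (c * h)) ≡ 1 [ZMOD N] ∧
        N ∣ ε * (c * (c * h)) := by
  unfold ConjTranslationMemGamma1
  rw [conj_translation_eq hdet]
  simp [Int.modEq_zero_iff_dvd]

theorem conjTranslationMemGamma1_one_iff (hdet : a * d - b * c = 1) :
    ConjTranslationMemGamma1 N a b c d 1 h ↔ N ∣ c * h := by
  have hac : IsCoprime a c := ⟨d, -b, by linear_combination hdet⟩
  simp only [conjTranslationMemGamma1_iff hdet, one_mul, Int.modEq_iff_dvd, sub_sub_cancel,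
    sub_add_cancel_left, dvd_neg]
  refine ⟨fun ⟨ha, _, hc⟩ => hac.dvd_of_dvd_mul_of_dvd_mul ha hc,
    fun hch => ⟨hch.mul_left a, hch.mul_left a, hch.mul_left c⟩⟩

theorem ConjTranslationMemGamma1.dvd_four_of_neg_one (hdet : a * d - b * c = 1)
    (hmem : ConjTranslationMemGamma1 N a b c d (-1) h) : N ∣ 4 ∧ N ∣ c * (c * h) := by
  obtain ⟨h00, h11, h10⟩ := (conjTranslationMemGamma1_iff hdet).1 hmem
  refine ⟨?_, by simpa using h10⟩
  have hsum := Int.ModEq.dvd (h00.add h11)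
  ring_nf at hsum
  simpa using hsum

theorem conjTranslationMemGamma1_four_neg_one (hdet : a * d - b * c = 1)
    (hc : Int.gcd c 4 = 2) : ConjTranslationMemGamma1 4 a b c d (-1) 1 := by
  obtain ⟨k, rfl⟩ : ∃ k, c = 4 * k + 2 :=
    ⟨c / 4, by have := Int.emod_four_eq_two_of_gcd_eq_two hc; omega⟩
  -- `a` is odd, since it is coprime to the even number `c`
  obtain ⟨s, rfl⟩ : Odd a := by
    refine Int.not_even_iff_odd.1 fun ⟨s, hs⟩ => ?_
    have h2 : (2 : ℤ) ∣ 1 := ⟨s * d - b * (2 * k + 1), by linear_combination -hdet + d * hs⟩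
    norm_num at h2
  rw [conjTranslationMemGamma1_iff hdet]
  refine ⟨(Int.modEq_iff_dvd.2 ⟨2 * s * k + s + k, by ring⟩).symm,
    (Int.modEq_iff_dvd.2 ⟨-(2 * s * k + s + k + 1), by ring⟩).symm,
    ⟨-(2 * k + 1) ^ 2, by ring⟩⟩

end ConjugateTranslation

theorem ConjTranslationMemGamma1.div_gcd_dvd {N : ℕ} {a b c d ε : ℤ} {h : ℕ} (hN : 0 < N)
    (hdet : a * d - b * c = 1) (hε : ε = 1 ∨ ε = -1) (hexc : ¬(N = 4 ∧ Int.gcd c 4 = 2))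
    (hmem : ConjTranslationMemGamma1 N a b c d ε h) : N / Int.gcd c N ∣ h := by
  rcases hε with rfl | rfl
  · exact (Int.natCast_dvd_mul_iff_div_gcd_dvd hN).1
      ((conjTranslationMemGamma1_one_iff hdet).1 hmem)
  obtain ⟨hN4, hcch⟩ := hmem.dvd_four_of_neg_one hdet
  have hg : Int.gcd c N ∣ N := Int.natCast_dvd_natCast.1 (Int.gcd_dvd_right c N)
  rcases Nat.eq_one_or_eq_self_of_dvd_of_dvd_four hg (Int.natCast_dvd_natCast.1 hN4) with
    hg1 | hgN | ⟨rfl, hg2⟩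
  · have hc : IsCoprime c N := Int.isCoprime_iff_gcd_eq_one.2 hg1
    rw [hg1, Nat.div_one]
    exact Int.natCast_dvd_natCast.1
      (hc.symm.dvd_of_dvd_mul_left (hc.symm.dvd_of_dvd_mul_left hcch))
  · rw [hgN, Nat.div_self hN]
    exact one_dvd h
  · exact absurd ⟨rfl, hg2⟩ hexc

/-- Cho–Koo–Park: the width of the cusp `a/c` (with `gcd(a,c)=1`, completed to a
matrix `σ = (a b; c d) ∈ SL₂(ℤ)` taking `∞` to `a/c`) for the group `Γ₁(N)` is
the least `h > 0` with `σ (1 h; 0 1) σ⁻¹ ∈ ±Γ₁(N)`; it equals `1` if `N = 4`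
and `gcd(c,4) = 2`, and `N / gcd(c,N)` otherwise. -/
theorem cusp_width_Gamma1 (N : ℕ) (hN : 0 < N) (a b c d : ℤ)
    (hdet : a * d - b * c = 1) :
    IsLeast {h : ℕ | 0 < h ∧
      ∃ ε : ℤ, (ε = 1 ∨ ε = -1) ∧
        (let M := ε • (!![a, b; c, d] * !![1, (h : ℤ); 0, 1] * !![d, -b; -c, a]);
          M 0 0 ≡ 1 [ZMOD (N : ℤ)] ∧ M 1 1 ≡ 1 [ZMOD (N : ℤ)] ∧
            M 1 0 ≡ 0 [ZMOD (N : ℤ)])}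
      (if N = 4 ∧ Int.gcd c 4 = 2 then 1 else N / Int.gcd c N) := by
  change IsLeast {h : ℕ | 0 < h ∧ ∃ ε : ℤ, (ε = 1 ∨ ε = -1) ∧
    ConjTranslationMemGamma1 N a b c d ε h} _
  split_ifs with hexc
  · obtain ⟨rfl, hc⟩ := hexc
    exact ⟨⟨one_pos, -1, .inr rfl, conjTranslationMemGamma1_four_neg_one hdet hc⟩,
      fun h hh => hh.1⟩
  have hg : Int.gcd c N ∣ N := Int.natCast_dvd_natCast.1 (Int.gcd_dvd_right c N)
  have hwidth : 0 < N / Int.gcd c N :=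
    Nat.div_pos (Nat.le_of_dvd hN hg) (Int.gcd_pos_of_ne_zero_right c (by omega))
  refine ⟨⟨hwidth, 1, .inl rfl, (conjTranslationMemGamma1_one_iff hdet).2
    ((Int.natCast_dvd_mul_iff_div_gcd_dvd hN).2 dvd_rfl)⟩, ?_⟩
  rintro h ⟨hpos, ε, hε, hmem⟩
  exact Nat.le_of_dvd hpos (hmem.div_gcd_dvd hN hdet hε hexc)
end
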